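/- Let α ∈ (0,1) be irrational and let X_α be the Sturmian subshift of slope α. Then for every n ≥ 2, the set L_n(X_α) is connected in the graph on {0,1}^n whose edges join words at Hamming distance at most 2 (the second power of the Hamming graph). -/

import Mathlib

/-!
For an irrational `α ∈ (0,1)` and the Sturmian subshift `X_α` of slope `α`,
for every `n ≥ 2` the length-`n` language of `X_α` is connected in the second power of
the Hamming graph (edges join distinct words at Hamming distance at most `2`).
-/

/-- The shift map `σ` on the full shift `{0,1}^ℤ`, `(σ x) n = x (n + 1)`. -/
def shiftMap (x : ℤ → Bool) : ℤ → Bool := fun n => x (n + 1)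

/-- The `k`-fold shift (for `k : ℤ`): `(σ^k x) n = x (n + k)`. -/
def shiftIter (k : ℤ) (x : ℤ → Bool) : ℤ → Bool := fun n => x (n + k)

/-- The Sturmian sequence of slope `α`: `s_α(n) = ⌊(n+1)α⌋ − ⌊nα⌋` (as an element of `{0,1}`,
encoded by `Bool` with `true = 1`). -/
noncomputable def sturmianSeq (α : ℝ) : ℤ → Bool :=
  fun n => decide (⌊((n : ℝ) + 1) * α⌋ - ⌊(n : ℝ) * α⌋ = 1)

/-- The Sturmian subshift of slope `α`: the closure of the shift orbit of `s_α`
in `{0,1}^ℤ` with the product topology. -/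
noncomputable def sturmianSubshift (α : ℝ) : Set (ℤ → Bool) :=
  closure {y | ∃ k : ℤ, y = shiftIter k (sturmianSeq α)}

/-- `Lang X n` is the set of words of length `n` occurring in points of `X`. -/
def Lang (X : Set (ℤ → Bool)) (n : ℕ) : Set (Fin n → Bool) :=
  {w | ∃ x ∈ X, ∀ k : Fin n, w k = x ((k : ℕ) : ℤ)}

/-- Connectivity in the second power of the Hamming graph: any two words of `L` are joined
by a path inside `L` whose consecutive words are distinct and at Hamming distance `≤ 2`. -/
def HammingSqConnected {n : ℕ} (L : Set (Fin n → Bool)) : Prop :=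
  ∀ u ∈ L, ∀ v ∈ L,
    Relation.ReflTransGen
      (fun a b => a ∈ L ∧ b ∈ L ∧ a ≠ b ∧ hammingDist a b ≤ 2) u v

noncomputable def floorSeq (α β : ℝ) (j : ℕ) : ℤ := ⌊(j : ℝ) * α + β⌋
noncomputable def wword (α : ℝ) (n : ℕ) (β : ℝ) : Fin n → Bool :=
  fun j => decide (floorSeq α β ((j : ℕ) + 1) - floorSeq α β (j : ℕ) = 1)

lemma orbit_word (α : ℝ) (n : ℕ) (k : ℤ) (j : Fin n) :
    wword α n (Int.fract ((k : ℝ) * α)) j = shiftIter k (sturmianSeq α) ((j : ℕ) : ℤ) := by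
  unfold wword shiftIter sturmianSeq floorSeq
  have h1 : ((((j:ℕ) + 1 : ℕ)) : ℝ) * α + Int.fract ((k:ℝ) * α)
      = (((((j:ℕ):ℤ) + k : ℤ) : ℝ) + 1) * α - ((⌊(k:ℝ)*α⌋ : ℤ) : ℝ) := by
    rw [Int.fract]; push_cast; ring
  have h2 : (((j:ℕ)) : ℝ) * α + Int.fract ((k:ℝ) * α)
      = ((((j:ℕ):ℤ) + k : ℤ) : ℝ) * α - ((⌊(k:ℝ)*α⌋ : ℤ) : ℝ) := by
    rw [Int.fract]; push_cast; ring
  rw [h1, h2, Int.floor_sub_intCast, Int.floor_sub_intCast, decide_eq_decide]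
  constructor <;> intro h <;> omega

lemma word_mem_lang (α : ℝ) (n : ℕ) (k : ℤ) :
    wword α n (Int.fract ((k:ℝ) * α)) ∈ Lang (sturmianSubshift α) n :=
  ⟨shiftIter k (sturmianSeq α), subset_closure ⟨k, rfl⟩, fun j => orbit_word α n k j⟩

lemma lang_eq_words {α : ℝ} {n : ℕ} {u : Fin n → Bool} (hu : u ∈ Lang (sturmianSubshift α) n) :
    ∃ k : ℤ, u = wword α n (Int.fract ((k:ℝ) * α)) := by
  obtain ⟨x, hx, hux⟩ := hu
  have hopen : IsOpen {y : ℤ → Bool | ∀ j : Fin n, y ((j:ℕ):ℤ) = x ((j:ℕ):ℤ)} := by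
    have he : {y : ℤ → Bool | ∀ j : Fin n, y ((j:ℕ):ℤ) = x ((j:ℕ):ℤ)}
        = ⋂ j : Fin n, (fun y : ℤ → Bool => y ((j:ℕ):ℤ)) ⁻¹' {x ((j:ℕ):ℤ)} := by
      ext y; simp [Set.mem_iInter]
    rw [he]
    exact isOpen_iInter_of_finite fun j =>
      (continuous_apply _).isOpen_preimage _ (isOpen_discrete _)
  obtain ⟨y, hy1, hy2⟩ := mem_closure_iff.mp hx _ hopen (fun j => rfl)
  obtain ⟨k, rfl⟩ := hy2
  refine ⟨k, funext fun j => ?_⟩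
  rw [hux j, ← hy1 j]
  exact (orbit_word α n k j).symm


lemma irr_aux {α : ℝ} (hirr : Irrational α) {a b : ℤ} (hb : b ≠ 0) (h : (a : ℝ) = (b : ℝ) * α) :
    False := by
  apply hirr
  refine ⟨(a : ℚ) / (b : ℚ), ?_⟩
  have hb' : ((b : ℚ) : ℝ) ≠ 0 := by exact_mod_cast (Int.cast_ne_zero (α := ℝ)).mpr hb
  push_cast
  rw [div_eq_iff (by exact_mod_cast hb')]
  linarith [h]

lemma dense_subgroup {α : ℝ} (hirr : Irrational α) :
    Dense ((AddSubgroup.closure ({1, α} : Set ℝ) : AddSubgroup ℝ) : Set ℝ) := by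
  rcases (AddSubgroup.closure ({1, α} : Set ℝ)).dense_or_cyclic with h | ⟨a, ha⟩
  · exact h
  · exfalso
    have h1 : (1:ℝ) ∈ AddSubgroup.closure ({1, α} : Set ℝ) :=
      AddSubgroup.subset_closure (by simp)
    have h2 : α ∈ AddSubgroup.closure ({1, α} : Set ℝ) :=
      AddSubgroup.subset_closure (by simp)
    rw [ha, AddSubgroup.mem_closure_singleton] at h1 h2
    obtain ⟨p, hp⟩ := h1
    obtain ⟨q, hq⟩ := h2
    have hp0 : p ≠ 0 := by rintro rfl; simp at hp
    apply irr_aux hirr (a := q) (b := p) hp0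
    have hpa : (p : ℝ) * a = 1 := by rw [← hp]; simp [zsmul_eq_mul]
    have hq' : (q : ℝ) * a = α := by rw [← hq]; simp [zsmul_eq_mul]
    have h3 : (q:ℝ) * ((p:ℝ)*a) = (p:ℝ) * ((q:ℝ)*a) := by ring
    rw [hpa, hq', mul_one] at h3
    exact h3

lemma exists_fract_mem {α : ℝ} (hirr : Irrational α) {a b : ℝ} (h0 : 0 ≤ a) (hab : a < b)
    (hb : b ≤ 1) : ∃ k : ℤ, a ≤ Int.fract ((k : ℝ) * α) ∧ Int.fract ((k : ℝ) * α) < b := by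
  obtain ⟨g, hg, hg1, hg2⟩ := (dense_subgroup hirr).exists_between hab
  rw [SetLike.mem_coe, AddSubgroup.mem_closure_pair] at hg
  obtain ⟨m, k, hmk⟩ := hg
  have hk : Int.fract ((k : ℝ) * α) = g := by
    have : (k : ℝ) * α = g - m := by
      rw [← hmk]; simp [zsmul_eq_mul]
    rw [this, Int.fract_sub_intCast, Int.fract_eq_self.mpr ⟨le_trans h0 hg1.le, lt_of_lt_of_le hg2 hb⟩]
  exact ⟨k, by rw [hk]; exact hg1.le, by rw [hk]; exact hg2⟩

lemma exists_matching_fract {α : ℝ} (hirr : Irrational α) (n : ℕ) {β : ℝ} (h0 : 0 ≤ β)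
    (h1 : β < 1) :
    ∃ k : ℤ, ∀ j ∈ Finset.range (n+1),
      floorSeq α (Int.fract ((k:ℝ)*α)) j = floorSeq α β j := by
  set T : Finset ℝ := insert (1 : ℝ) ((Finset.range (n+1)).image
    (fun j : ℕ => ((⌊(j:ℝ)*α + β⌋ : ℤ) : ℝ) + 1 - (j:ℝ)*α)) with hT
  have hTne : T.Nonempty := ⟨1, Finset.mem_insert_self _ _⟩
  set c := T.min' hTne with hc
  have hβc : β < c := by
    rw [hc, Finset.lt_min'_iff]
    intro y hy
    rcases Finset.mem_insert.mp hy with rfl | hy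
    · exact h1
    · obtain ⟨j, hj, rfl⟩ := Finset.mem_image.mp hy
      have := Int.lt_floor_add_one ((j:ℝ)*α + β)
      linarith
  have hc1 : c ≤ 1 := Finset.min'_le _ _ (Finset.mem_insert_self _ _)
  obtain ⟨k, hk1, hk2⟩ := exists_fract_mem hirr h0 hβc hc1
  refine ⟨k, fun j hj => ?_⟩
  have hcj : c ≤ ((⌊(j:ℝ)*α + β⌋ : ℤ) : ℝ) + 1 - (j:ℝ)*α :=
    Finset.min'_le _ _ (Finset.mem_insert_of_mem (Finset.mem_image_of_mem _ hj))
  unfold floorSeq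
  rw [Int.floor_eq_iff]
  constructor
  · exact le_trans (Int.floor_le _) (by linarith)
  · push_cast
    linarith

lemma wword_mem {α : ℝ} (hirr : Irrational α) (n : ℕ) {β : ℝ} (h0 : 0 ≤ β) (h1 : β < 1) :
    wword α n β ∈ Lang (sturmianSubshift α) n := by
  obtain ⟨k, hk⟩ := exists_matching_fract hirr n h0 h1
  have heq : wword α n β = wword α n (Int.fract ((k:ℝ)*α)) := funext fun j => by
    unfold wword
    rw [hk (j:ℕ) (Finset.mem_range.mpr (by omega)),
      hk ((j:ℕ)+1) (Finset.mem_range.mpr (by omega))]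
  rw [heq]
  exact word_mem_lang α n k

lemma diff01 (α : ℝ) (hα0 : 0 < α) (hα1 : α < 1) (t : ℝ) (j : ℕ) :
    floorSeq α t (j + 1) - floorSeq α t j = 0 ∨ floorSeq α t (j + 1) - floorSeq α t j = 1 := by
  unfold floorSeq
  have h1 : ((j : ℝ)) * α + t ≤ ((j + 1 : ℕ) : ℝ) * α + t := by push_cast; nlinarith
  have h2 : ((j + 1 : ℕ) : ℝ) * α + t ≤ ((j : ℝ) * α + t) + 1 := by push_cast; nlinarith
  have l1 := Int.floor_le_floor h1
  have l2 : ⌊((j + 1 : ℕ) : ℝ) * α + t⌋ ≤ ⌊((j : ℝ) * α + t) + 1⌋ := Int.floor_le_floor h2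
  rw [Int.floor_add_one] at l2
  omega

lemma connect_aux {α : ℝ} (hα0 : 0 < α) (hα1 : α < 1) (hirr : Irrational α) {n : ℕ}
    (hn : 2 ≤ n) :
    ∀ m : ℕ, ∀ β : ℝ, 0 ≤ β → β < 1 →
      ((Finset.range (n+1)).filter (fun j => floorSeq α β j ≠ floorSeq α 0 j)).card = m →
      Relation.ReflTransGen
        (fun a b => a ∈ Lang (sturmianSubshift α) n ∧ b ∈ Lang (sturmianSubshift α) n ∧
          a ≠ b ∧ hammingDist a b ≤ 2) (wword α n β) (wword α n 0) := by
  intro m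
  induction m with
  | zero =>
    intro β h0 h1 hcard
    rw [Finset.card_eq_zero] at hcard
    have hall : ∀ j ∈ Finset.range (n+1), floorSeq α β j = floorSeq α 0 j := by
      intro j hj
      by_contra h
      have : j ∈ (Finset.range (n+1)).filter
          (fun j => floorSeq α β j ≠ floorSeq α 0 j) := Finset.mem_filter.mpr ⟨hj, h⟩
      rw [hcard] at this
      exact absurd this (Finset.notMem_empty j)
    have heq : wword α n β = wword α n 0 := funext fun j => by
      unfold wword
      rw [hall (j : ℕ) (Finset.mem_range.mpr (by omega)),
        hall ((j : ℕ) + 1) (Finset.mem_range.mpr (by omega))]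
    rw [heq]
  | succ m ih =>
    intro β h0 h1 hcard
    set J := (Finset.range (n+1)).filter (fun j => floorSeq α β j ≠ floorSeq α 0 j) with hJ
    have hJne : J.Nonempty := Finset.card_pos.mp (by rw [hcard]; omega)
    have hmono : ∀ (j : ℕ) {s t : ℝ}, s ≤ t → floorSeq α s j ≤ floorSeq α t j :=
      fun j s t h => Int.floor_le_floor (by unfold floorSeq at *; linarith)
    have hJrange : ∀ j ∈ J, j ∈ Finset.range (n+1) := fun j hj => (Finset.mem_filter.mp hj).1
    have hplus : ∀ j ∈ J, floorSeq α β j = floorSeq α 0 j + 1 := by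
      intro j hj
      have hne := (Finset.mem_filter.mp hj).2
      have hle : floorSeq α β j ≤ floorSeq α 0 j + 1 := by
        have h2 : (j:ℝ)*α + β ≤ ((j:ℝ)*α + 0) + 1 := by linarith
        have := Int.floor_le_floor h2
        rw [Int.floor_add_one] at this
        exact this
      have hge : floorSeq α 0 j ≤ floorSeq α β j := hmono j h0
      omega
    set t : ℕ → ℝ := fun j => ((floorSeq α β j : ℤ) : ℝ) - (j:ℝ)*α with ht
    have htpos : ∀ j ∈ J, 0 < t j := by
      intro j hj
      have h2 := hplus j hj
      have h3 : ((j:ℝ)*α + 0) < ((floorSeq α 0 j : ℤ) : ℝ) + 1 := Int.lt_floor_add_one _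
      have : ((floorSeq α β j : ℤ) : ℝ) = ((floorSeq α 0 j : ℤ) : ℝ) + 1 := by
        rw [h2]; push_cast; ring
      simp only [ht]
      rw [this]
      linarith
    have htle : ∀ j : ℕ, t j ≤ β := by
      intro j
      have := Int.floor_le ((j:ℝ)*α + β)
      simp only [ht]
      unfold floorSeq
      linarith [Int.floor_le ((j:ℝ)*α + β)]
    have htinj : ∀ i ∈ Finset.range (n+1), ∀ j ∈ Finset.range (n+1), i ≠ j → t i ≠ t j := by
      intro i _ j _ hij he
      have : ((floorSeq α β i - floorSeq α β j : ℤ) : ℝ)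
          = (((i:ℤ) - (j:ℤ) : ℤ) : ℝ) * α := by
        simp only [ht] at he
        push_cast
        push_cast at he
        linarith
      exact irr_aux hirr (by omega : (i:ℤ) - (j:ℤ) ≠ 0) this
    -- maximum crossing
    obtain ⟨j₀, hj₀J, hj₀max⟩ : ∃ j₀ ∈ J, ∀ j ∈ J, t j ≤ t j₀ := by
      obtain ⟨j₀, hj₀J, hj₀eq⟩ := Finset.mem_image.mp (Finset.max'_mem (J.image t) (hJne.image t))
      refine ⟨j₀, hj₀J, fun j hj => ?_⟩
      rw [hj₀eq]
      exact Finset.le_max' _ _ (Finset.mem_image_of_mem t hj)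
    set E : Finset ℝ := insert (0:ℝ) ((J.erase j₀).image t) with hE
    have hEne : E.Nonempty := ⟨0, Finset.mem_insert_self _ _⟩
    set β' := E.max' hEne with hβ'
    have hβ'0 : 0 ≤ β' := Finset.le_max' _ _ (Finset.mem_insert_self _ _)
    have hβ'lt : β' < t j₀ := by
      rw [hβ', Finset.max'_lt_iff]
      intro y hy
      rcases Finset.mem_insert.mp hy with rfl | hy
      · exact htpos j₀ hj₀J
      · obtain ⟨j, hj, rfl⟩ := Finset.mem_image.mp hy
        have hjJ := Finset.mem_of_mem_erase hj
        have hne := Finset.ne_of_mem_erase hj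
        exact lt_of_le_of_ne (hj₀max j hjJ) (htinj j (hJrange j hjJ) j₀ (hJrange j₀ hj₀J) hne)
    have hβ'β : β' < β := lt_of_lt_of_le hβ'lt (htle j₀)
    have hβ'1 : β' < 1 := lt_trans hβ'β h1
    have hβ'ge : ∀ j ∈ J.erase j₀, t j ≤ β' := fun j hj =>
      Finset.le_max' _ _ (Finset.mem_insert_of_mem (Finset.mem_image_of_mem t hj))
    -- key floor computation at β'
    have hkey : ∀ j ∈ Finset.range (n+1),
        floorSeq α β' j = if j = j₀ then floorSeq α β j - 1 else floorSeq α β j := by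
      intro j hj
      by_cases hcase : j = j₀
      · subst hcase
        rw [if_pos rfl, hplus j hj₀J]
        have hub : floorSeq α β' j < floorSeq α 0 j + 1 := by
          apply Int.floor_lt.mpr
          have : (j:ℝ)*α + β' < (j:ℝ)*α + t j := by linarith
          have h2 : (j:ℝ)*α + t j = ((floorSeq α β j : ℤ) : ℝ) := by simp only [ht]; ring
          rw [hplus j hj₀J] at h2
          push_cast at h2 ⊢
          linarith
        have hlb : floorSeq α 0 j ≤ floorSeq α β' j := hmono j hβ'0
        omega
      · rw [if_neg hcase]
        by_cases hjJ : j ∈ J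
        · have hjE : j ∈ J.erase j₀ := Finset.mem_erase.mpr ⟨hcase, hjJ⟩
          have hlb : floorSeq α β j ≤ floorSeq α β' j := by
            apply Int.le_floor.mpr
            have : (j:ℝ)*α + t j ≤ (j:ℝ)*α + β' := by linarith [hβ'ge j hjE]
            have h2 : (j:ℝ)*α + t j = ((floorSeq α β j : ℤ) : ℝ) := by simp only [ht]; ring
            linarith
          have hub : floorSeq α β' j ≤ floorSeq α β j := hmono j hβ'β.le
          omega
        · have h5 : floorSeq α β j = floorSeq α 0 j := by
            by_contra h
            exact hjJ (Finset.mem_filter.mpr ⟨hj, h⟩)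
          have hlb : floorSeq α 0 j ≤ floorSeq α β' j := hmono j hβ'0
          have hub : floorSeq α β' j ≤ floorSeq α β j := hmono j hβ'β.le
          omega
    have hj₀n : j₀ ≤ n := by
      have := hJrange j₀ hj₀J
      rw [Finset.mem_range] at this
      omega
    -- new filter equals J.erase j₀
    have hfilter : (Finset.range (n+1)).filter
        (fun j => floorSeq α β' j ≠ floorSeq α 0 j) = J.erase j₀ := by
      ext j
      constructor
      · intro hjf
        obtain ⟨hjr, hne2⟩ := Finset.mem_filter.mp hjf
        have hk := hkey j hjr
        by_cases hcase : j = j₀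
        · exfalso
          subst hcase
          rw [if_pos rfl, hplus j hj₀J] at hk
          omega
        · rw [if_neg hcase] at hk
          exact Finset.mem_erase.mpr ⟨hcase, Finset.mem_filter.mpr ⟨hjr, by rw [← hk]; exact hne2⟩⟩
      · intro hje
        obtain ⟨hcase, hjJ⟩ := Finset.mem_erase.mp hje
        have hjr := hJrange j hjJ
        have hk := hkey j hjr
        rw [if_neg hcase] at hk
        exact Finset.mem_filter.mpr ⟨hjr, by rw [hk]; exact (Finset.mem_filter.mp hjJ).2⟩
    have hcard' : ((Finset.range (n+1)).filter
        (fun j => floorSeq α β' j ≠ floorSeq α 0 j)).card = m := by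
      rw [hfilter, Finset.card_erase_of_mem hj₀J, hcard]
      omega
    -- coordinates away from j₀ agree
    have hagree : ∀ i : Fin n, (i:ℕ) ≠ j₀ → (i:ℕ) + 1 ≠ j₀ → wword α n β' i = wword α n β i := by
      intro i hi1 hi2
      unfold wword
      have hr1 : (i:ℕ) ∈ Finset.range (n+1) := Finset.mem_range.mpr (by omega)
      have hr2 : (i:ℕ) + 1 ∈ Finset.range (n+1) := Finset.mem_range.mpr (by omega)
      rw [hkey _ hr1, hkey _ hr2, if_neg hi1, if_neg hi2]
    -- words differ at a coordinate near j₀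
    have hne : wword α n β' ≠ wword α n β := by
      rcases lt_or_eq_of_le hj₀n with hlt | heq
      · intro h
        have hco := congrFun h ⟨j₀, hlt⟩
        unfold wword at hco
        simp only [Fin.val_mk] at hco
        have hr1 : j₀ ∈ Finset.range (n+1) := Finset.mem_range.mpr (by omega)
        have hr2 : j₀ + 1 ∈ Finset.range (n+1) := Finset.mem_range.mpr (by omega)
        rw [hkey _ hr1, hkey _ hr2, if_pos rfl, if_neg (by omega)] at hco
        have d1 := diff01 α hα0 hα1 β' j₀
        have d2 := diff01 α hα0 hα1 β j₀
        rw [hkey _ hr1, hkey _ hr2, if_pos rfl, if_neg (by omega)] at d1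
        rw [decide_eq_decide] at hco
        omega
      · intro h
        have hn1 : j₀ - 1 < n := by omega
        have hco := congrFun h ⟨j₀ - 1, hn1⟩
        unfold wword at hco
        simp only [Fin.val_mk] at hco
        have he1 : j₀ - 1 + 1 = j₀ := by omega
        have hr1 : j₀ - 1 ∈ Finset.range (n+1) := Finset.mem_range.mpr (by omega)
        have hr2 : j₀ ∈ Finset.range (n+1) := Finset.mem_range.mpr (by omega)
        rw [he1, hkey _ hr1, hkey _ hr2, if_pos rfl, if_neg (by omega)] at hco
        have d1 := diff01 α hα0 hα1 β' (j₀ - 1)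
        have d2 := diff01 α hα0 hα1 β (j₀ - 1)
        rw [he1, hkey _ hr1, hkey _ hr2, if_pos rfl, if_neg (by omega)] at d1
        rw [he1] at d2
        rw [decide_eq_decide] at hco
        omega
    -- hamming distance bound
    have hdist : hammingDist (wword α n β') (wword α n β) ≤ 2 := by
      have hsub : (Finset.univ.filter fun i : Fin n => wword α n β' i ≠ wword α n β i)
          ⊆ Finset.univ.filter (fun i : Fin n => (i:ℕ) = j₀ ∨ (i:ℕ)+1 = j₀) := by
        intro i hi
        simp only [Finset.mem_filter, Finset.mem_univ, true_and] at hi ⊢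
        by_contra h
        push_neg at h
        exact hi (hagree i h.1 h.2)
      have hcard2 : (Finset.univ.filter (fun i : Fin n => (i:ℕ) = j₀ ∨ (i:ℕ)+1 = j₀)).card ≤ 2 := by
        have hmaps : ∀ a ∈ Finset.univ.filter (fun i : Fin n => (i:ℕ) = j₀ ∨ (i:ℕ)+1 = j₀),
            (a:ℕ) ∈ ({j₀, j₀ - 1} : Finset ℕ) := by
          intro a ha
          simp only [Finset.mem_filter, Finset.mem_univ, true_and] at ha
          have : (a:ℕ) = j₀ ∨ (a:ℕ) = j₀ - 1 := by omega
          simpa using this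
        have := Finset.card_le_card_of_injOn (fun i : Fin n => (i:ℕ)) hmaps
          (fun a _ b _ hab => Fin.val_injective hab)
        calc (Finset.univ.filter (fun i : Fin n => (i:ℕ) = j₀ ∨ (i:ℕ)+1 = j₀)).card
            ≤ ({j₀, j₀ - 1} : Finset ℕ).card := this
          _ ≤ 2 := by
            have h1 : ({j₀ - 1} : Finset ℕ).card = 1 := Finset.card_singleton _
            have h2 := Finset.card_insert_le j₀ ({j₀ - 1} : Finset ℕ)
            omega
      calc hammingDist (wword α n β') (wword α n β)
          = (Finset.univ.filter fun i : Fin n => wword α n β' i ≠ wword α n β i).card := rfl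
        _ ≤ _ := Finset.card_le_card hsub
        _ ≤ 2 := hcard2
    refine Relation.ReflTransGen.head ?_ (ih β' hβ'0 hβ'1 hcard')
    exact ⟨wword_mem hirr n h0 h1, wword_mem hirr n hβ'0 hβ'1, hne.symm,
      by rwa [hammingDist_comm]⟩

/-- For a Sturmian subshift of irrational slope `α ∈ (0,1)`, the language of words of
length `n` is connected in the second power of the Hamming graph for every `n ≥ 2`. -/
theorem sturmian_hamming_square_connected (α : ℝ) (hα0 : 0 < α) (hα1 : α < 1)
    (hirr : Irrational α) (n : ℕ) (hn : 2 ≤ n) :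
    HammingSqConnected (Lang (sturmianSubshift α) n) := by
  intro u hu v hv
  obtain ⟨k₁, rfl⟩ := lang_eq_words hu
  obtain ⟨k₂, rfl⟩ := lang_eq_words hv
  have hsymm : Symmetric (fun a b : Fin n → Bool =>
      a ∈ Lang (sturmianSubshift α) n ∧ b ∈ Lang (sturmianSubshift α) n ∧
        a ≠ b ∧ hammingDist a b ≤ 2) := by
    rintro a b ⟨ha, hb, hne, hd⟩
    exact ⟨hb, ha, hne.symm, by rwa [hammingDist_comm]⟩
  have h1 := connect_aux hα0 hα1 hirr hn
    (((Finset.range (n+1)).filter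
      (fun j => floorSeq α (Int.fract ((k₁:ℝ)*α)) j ≠ floorSeq α 0 j)).card)
    (Int.fract ((k₁:ℝ)*α)) (Int.fract_nonneg _) (Int.fract_lt_one _) rfl
  have h2 := connect_aux hα0 hα1 hirr hn
    (((Finset.range (n+1)).filter
      (fun j => floorSeq α (Int.fract ((k₂:ℝ)*α)) j ≠ floorSeq α 0 j)).card)
    (Int.fract ((k₂:ℝ)*α)) (Int.fract_nonneg _) (Int.fract_lt_one _) rfl
  exact h1.trans ((@Relation.ReflTransGen.symmetric _ _ ⟨fun _ _ h => hsymm h⟩).symm _ _ h2)
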